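/- The function g₄(b) = h₃(b)/h₃'(b) is increasing on (0,∞), satisfies lim_{b↓0} g₄(b) = μ/(2δ), and lim_{b↑∞} g₄(b) = 1/θ₊. -/

import Mathlib

open Real Filter Set

/-- Positive root θ₊ of (σ²/2)r² + μr − δ = 0. -/
noncomputable def thetaP (σ μ δ : ℝ) : ℝ := (-μ + Real.sqrt (μ ^ 2 + 2 * σ ^ 2 * δ)) / σ ^ 2

/-- Negative root θ₋ of (σ²/2)r² + μr − δ = 0. -/
noncomputable def thetaM (σ μ δ : ℝ) : ℝ := (-μ - Real.sqrt (μ ^ 2 + 2 * σ ^ 2 * δ)) / σ ^ 2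

/-- η̄ = 2σ²/μ². -/
noncomputable def etaBar (σ μ : ℝ) : ℝ := 2 * σ ^ 2 / μ ^ 2

/-- x̂ = σ²/(μ(1 + δη̄)). -/
noncomputable def xHat (σ μ δ : ℝ) : ℝ := σ ^ 2 / (μ * (1 + δ * etaBar σ μ))

/-- ā₁. -/
noncomputable def aBar1 (σ μ δ : ℝ) : ℝ :=
  (δ * etaBar σ μ / (1 + δ * etaBar σ μ)) * xHat σ μ δ ^ (-(1 / (1 + δ * etaBar σ μ))) -
    thetaM σ μ δ * xHat σ μ δ ^ (δ * etaBar σ μ / (1 + δ * etaBar σ μ))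

/-- ā₂. -/
noncomputable def aBar2 (σ μ δ : ℝ) : ℝ :=
  (δ * etaBar σ μ / (1 + δ * etaBar σ μ)) * xHat σ μ δ ^ (-(1 / (1 + δ * etaBar σ μ))) -
    thetaP σ μ δ * xHat σ μ δ ^ (δ * etaBar σ μ / (1 + δ * etaBar σ μ))

/-- h₃(x) = (ā₁e^{θ₊x} − ā₂e^{θ₋x})/(θ₊ − θ₋). -/
noncomputable def h3 (σ μ δ : ℝ) (x : ℝ) : ℝ :=
  (aBar1 σ μ δ * Real.exp (thetaP σ μ δ * x) - aBar2 σ μ δ * Real.exp (thetaM σ μ δ * x)) /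
    (thetaP σ μ δ - thetaM σ μ δ)

/-- h₃'(x). -/
noncomputable def h3' (σ μ δ : ℝ) (x : ℝ) : ℝ :=
  (aBar1 σ μ δ * thetaP σ μ δ * Real.exp (thetaP σ μ δ * x) -
      aBar2 σ μ δ * thetaM σ μ δ * Real.exp (thetaM σ μ δ * x)) /
    (thetaP σ μ δ - thetaM σ μ δ)

/-- g₄(b) = h₃(b)/h₃'(b). -/
noncomputable def g4 (σ μ δ : ℝ) (b : ℝ) : ℝ := h3 σ μ δ b / h3' σ μ δ b

/-!
Both `h₃` and `h₃'` are, up to the common factor `1 / (θ₊ − θ₋)`, combinations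
`N(x) = A e^{Px} − C e^{Mx}` with `A, C > 0` and `M < 0 < P`, the second being the derivative
of the first. The Wronskian-type identity `N'² − N N'' = A C (P − M)² e^{(P+M)x} > 0` makes `N / N'`
strictly increasing; its value at `0` is `(A − C) / (A P − C M)`, and for large `x` the term
`e^{Px}` dominates, giving the limit `1 / P`. Writing `ā₁ = (2δ/μ − θ₋) u` and
`ā₂ = (2δ/μ − θ₊) u` with `u = x̂^{δη̄/(1+δη̄)}` evaluates the value at `0` as `μ / (2δ)`.
-/

open Topology

noncomputable def expCombo (A P C M x : ℝ) : ℝ := A * exp (P * x) - C * exp (M * x)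

noncomputable def expComboRatio (A P C M x : ℝ) : ℝ :=
  expCombo A P C M x / expCombo (A * P) P (C * M) M x

section ExpCombo

variable {A P C M : ℝ}

theorem hasDerivAt_expCombo (A P C M x : ℝ) :
    HasDerivAt (expCombo A P C M) (expCombo (A * P) P (C * M) M x) x := by
  have hexp (a : ℝ) : HasDerivAt (fun y => exp (a * y)) (exp (a * x) * a) x := by
    simpa using ((hasDerivAt_id x).const_mul a).exp
  refine (((hexp P).const_mul A).sub ((hexp M).const_mul C)).congr_deriv ?_
  unfold expCombo
  ring

theorem continuous_expCombo (A P C M : ℝ) : Continuous (expCombo A P C M) := by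
  unfold expCombo
  fun_prop

theorem expCombo_pos (hA : 0 < A) (hC : C ≤ 0) (x : ℝ) : 0 < expCombo A P C M x := by
  have := mul_nonpos_of_nonpos_of_nonneg hC (exp_pos (M * x)).le
  unfold expCombo
  nlinarith [mul_pos hA (exp_pos (P * x))]

theorem expCombo_eq_exp_mul (A P C M x : ℝ) :
    expCombo A P C M x = exp (P * x) * (A - C * exp ((M - P) * x)) := by
  have : exp (P * x) * exp ((M - P) * x) = exp (M * x) := by rw [← exp_add]; ring_nf
  unfold expCombo
  linear_combination C * this

theorem expCombo_wronskian (A P C M x : ℝ) :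
    expCombo (A * P) P (C * M) M x ^ 2 -
        expCombo A P C M x * expCombo (A * P * P) P (C * M * M) M x =
      A * C * (P - M) ^ 2 * exp ((P + M) * x) := by
  have : exp (P * x) * exp (M * x) = exp ((P + M) * x) := by rw [← exp_add]; ring_nf
  unfold expCombo
  linear_combination A * C * (P - M) ^ 2 * this

theorem expComboRatio_denom_pos (hA : 0 < A) (hC : 0 ≤ C) (hP : 0 < P) (hM : M ≤ 0) (x : ℝ) :
    0 < expCombo (A * P) P (C * M) M x :=
  expCombo_pos (mul_pos hA hP) (mul_nonpos_of_nonneg_of_nonpos hC hM) x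

theorem continuous_expComboRatio (hA : 0 < A) (hC : 0 ≤ C) (hP : 0 < P) (hM : M ≤ 0) :
    Continuous (expComboRatio A P C M) :=
  (continuous_expCombo A P C M).div (continuous_expCombo _ P _ M)
    fun x => (expComboRatio_denom_pos hA hC hP hM x).ne'

theorem strictMono_expComboRatio (hA : 0 < A) (hC : 0 < C) (hP : 0 < P) (hM : M < 0) :
    StrictMono (expComboRatio A P C M) := by
  refine strictMono_of_deriv_pos fun x => ?_
  have hD := expComboRatio_denom_pos hA hC.le hP hM.le x
  have hD' : HasDerivAt (expComboRatio A P C M) _ x :=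
    (hasDerivAt_expCombo A P C M x).div (hasDerivAt_expCombo (A * P) P (C * M) M x) hD.ne'
  rw [hD'.deriv, ← sq, expCombo_wronskian]
  have : 0 < P - M := by linarith
  positivity

theorem expComboRatio_zero (A P C M : ℝ) :
    expComboRatio A P C M 0 = (A - C) / (A * P - C * M) := by
  simp [expComboRatio, expCombo]

theorem tendsto_expComboRatio_atTop (hA : A ≠ 0) (hP : P ≠ 0) (hMP : M < P) :
    Tendsto (expComboRatio A P C M) atTop (𝓝 (1 / P)) := by
  have hdecay : Tendsto (fun x => exp ((M - P) * x)) atTop (𝓝 0) :=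
    tendsto_exp_atBot.comp (tendsto_id.const_mul_atTop_of_neg (sub_neg.mpr hMP))
  have hlim : Tendsto (fun x => (A - C * exp ((M - P) * x)) / (A * P - C * M * exp ((M - P) * x)))
      atTop (𝓝 ((A - C * 0) / (A * P - C * M * 0))) :=
    (tendsto_const_nhds.sub (hdecay.const_mul C)).div
      (tendsto_const_nhds.sub (hdecay.const_mul (C * M))) (by simp [hA, hP])
  have hval : (A - C * 0) / (A * P - C * M * 0) = 1 / P := by
    rw [mul_zero, mul_zero, sub_zero, sub_zero]
    field_simp
  rw [hval] at hlim
  refine hlim.congr fun x => ?_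
  rw [expComboRatio, expCombo_eq_exp_mul, expCombo_eq_exp_mul,
    mul_div_mul_left _ _ (exp_pos _).ne']

end ExpCombo

section Reinsurance

variable {σ μ δ : ℝ}

theorem abs_lt_sqrt_disc (hσ : σ ≠ 0) (hδ : 0 < δ) : |μ| < √(μ ^ 2 + 2 * σ ^ 2 * δ) := by
  rw [← sqrt_sq_eq_abs]
  exact sqrt_lt_sqrt (sq_nonneg μ) (by have := sq_pos_of_ne_zero hσ; nlinarith)

theorem thetaP_pos (hσ : σ ≠ 0) (hδ : 0 < δ) : 0 < thetaP σ μ δ := by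
  have := (abs_lt_sqrt_disc (μ := μ) hσ hδ).trans_le' (le_abs_self μ)
  exact div_pos (by linarith) (sq_pos_of_ne_zero hσ)

theorem thetaM_neg (hσ : σ ≠ 0) (hδ : 0 < δ) : thetaM σ μ δ < 0 := by
  have := (abs_lt_sqrt_disc (μ := μ) hσ hδ).trans_le' (neg_le_abs μ)
  exact div_neg_of_neg_of_pos (by linarith) (sq_pos_of_ne_zero hσ)

theorem thetaM_lt_thetaP (hσ : σ ≠ 0) (hδ : 0 < δ) : thetaM σ μ δ < thetaP σ μ δ :=
  (thetaM_neg hσ hδ).trans (thetaP_pos hσ hδ)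

theorem thetaP_lt_two_mul_div (hσ : σ ≠ 0) (hμ : 0 < μ) (hδ : 0 < δ) :
    thetaP σ μ δ < 2 * δ / μ := by
  have hs := abs_lt_sqrt_disc (μ := μ) hσ hδ
  rw [abs_of_pos hμ] at hs
  have hs2 := sq_sqrt (by positivity : 0 ≤ μ ^ 2 + 2 * σ ^ 2 * δ)
  rw [thetaP, div_lt_div_iff₀ (sq_pos_of_ne_zero hσ) hμ]
  nlinarith

theorem xHat_pos (hσ : σ ≠ 0) (hμ : 0 < μ) (hδ : 0 ≤ δ) : 0 < xHat σ μ δ := by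
  have := sq_pos_of_ne_zero hσ
  unfold xHat etaBar
  positivity

/-- Since `δη̄ / (1 + δη̄) = (2δ/μ) x̂`. -/
theorem etaBar_div_mul_xHat_rpow (hσ : σ ≠ 0) (hμ : 0 < μ) (hδ : 0 ≤ δ) :
    δ * etaBar σ μ / (1 + δ * etaBar σ μ) * xHat σ μ δ ^ (-(1 / (1 + δ * etaBar σ μ))) =
      2 * δ / μ * xHat σ μ δ ^ (δ * etaBar σ μ / (1 + δ * etaBar σ μ)) := by
  have hx := xHat_pos hσ hμ hδ
  have he : 0 < 1 + δ * etaBar σ μ := by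
    have : 0 ≤ etaBar σ μ := by unfold etaBar; positivity
    nlinarith
  have hexp : -(1 / (1 + δ * etaBar σ μ)) = δ * etaBar σ μ / (1 + δ * etaBar σ μ) - 1 := by
    field_simp
    ring
  have hcoef : δ * etaBar σ μ / (1 + δ * etaBar σ μ) = 2 * δ / μ * xHat σ μ δ := by
    unfold xHat etaBar
    field_simp
  rw [hexp, rpow_sub hx, rpow_one, hcoef]
  field_simp

theorem aBar1_eq (hσ : σ ≠ 0) (hμ : 0 < μ) (hδ : 0 ≤ δ) :
    aBar1 σ μ δ = (2 * δ / μ - thetaM σ μ δ) *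
      xHat σ μ δ ^ (δ * etaBar σ μ / (1 + δ * etaBar σ μ)) := by
  rw [aBar1, etaBar_div_mul_xHat_rpow hσ hμ hδ]
  ring

theorem aBar2_eq (hσ : σ ≠ 0) (hμ : 0 < μ) (hδ : 0 ≤ δ) :
    aBar2 σ μ δ = (2 * δ / μ - thetaP σ μ δ) *
      xHat σ μ δ ^ (δ * etaBar σ μ / (1 + δ * etaBar σ μ)) := by
  rw [aBar2, etaBar_div_mul_xHat_rpow hσ hμ hδ]
  ring

theorem aBar1_pos (hσ : σ ≠ 0) (hμ : 0 < μ) (hδ : 0 < δ) : 0 < aBar1 σ μ δ := by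
  rw [aBar1_eq hσ hμ hδ.le]
  have := thetaM_neg (μ := μ) hσ hδ
  have : 0 < 2 * δ / μ := by positivity
  exact mul_pos (by linarith) (rpow_pos_of_pos (xHat_pos hσ hμ hδ.le) _)

theorem aBar2_pos (hσ : σ ≠ 0) (hμ : 0 < μ) (hδ : 0 < δ) : 0 < aBar2 σ μ δ := by
  rw [aBar2_eq hσ hμ hδ.le]
  exact mul_pos (sub_pos.mpr (thetaP_lt_two_mul_div hσ hμ hδ))
    (rpow_pos_of_pos (xHat_pos hσ hμ hδ.le) _)

theorem g4_eq_expComboRatio (hσ : σ ≠ 0) (hδ : 0 < δ) :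
    g4 σ μ δ =
      expComboRatio (aBar1 σ μ δ) (thetaP σ μ δ) (aBar2 σ μ δ) (thetaM σ μ δ) := by
  funext x
  exact div_div_div_cancel_right₀ (sub_pos.mpr (thetaM_lt_thetaP hσ hδ)).ne' _ _

theorem g4_zero (hσ : σ ≠ 0) (hμ : 0 < μ) (hδ : 0 < δ) : g4 σ μ δ 0 = μ / (2 * δ) := by
  have hPM := (sub_pos.mpr (thetaM_lt_thetaP (μ := μ) hσ hδ)).ne'
  have hu := (rpow_pos_of_pos (xHat_pos hσ hμ hδ.le)
    (δ * etaBar σ μ / (1 + δ * etaBar σ μ))).ne'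
  rw [g4_eq_expComboRatio hσ hδ, expComboRatio_zero, aBar1_eq hσ hμ hδ.le,
    aBar2_eq hσ hμ hδ.le]
  set u := xHat σ μ δ ^ (δ * etaBar σ μ / (1 + δ * etaBar σ μ))
  set k := 2 * δ / μ
  have hnum : (k - thetaM σ μ δ) * u - (k - thetaP σ μ δ) * u =
      (thetaP σ μ δ - thetaM σ μ δ) * u := by
    ring
  have hden :
      (k - thetaM σ μ δ) * u * thetaP σ μ δ - (k - thetaP σ μ δ) * u * thetaM σ μ δ =
        k * ((thetaP σ μ δ - thetaM σ μ δ) * u) := by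
    ring
  rw [hnum, hden, div_mul_cancel_right₀ (mul_ne_zero hPM hu), inv_div]

end Reinsurance

theorem g4_monotone_and_limits (σ μ δ : ℝ) (hσ : 0 < σ) (hμ : 0 < μ) (hδ : 0 < δ) :
    MonotoneOn (g4 σ μ δ) (Set.Ioi 0) ∧
    Tendsto (g4 σ μ δ) (nhdsWithin 0 (Set.Ioi 0)) (nhds (μ / (2 * δ))) ∧
    Tendsto (g4 σ μ δ) atTop (nhds (1 / thetaP σ μ δ)) := by
  have hP := thetaP_pos (μ := μ) hσ.ne' hδ
  have hM := thetaM_neg (μ := μ) hσ.ne' hδ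
  have hA := aBar1_pos hσ.ne' hμ hδ
  have hC := aBar2_pos hσ.ne' hμ hδ
  have hg := g4_eq_expComboRatio (μ := μ) hσ.ne' hδ
  have hcont : Continuous (g4 σ μ δ) := hg ▸ continuous_expComboRatio hA hC.le hP hM.le
  refine ⟨hg ▸ (strictMono_expComboRatio hA hC hP hM).monotone.monotoneOn _, ?_,
    hg ▸ tendsto_expComboRatio_atTop hA.ne' hP.ne' (thetaM_lt_thetaP hσ.ne' hδ)⟩
  rw [← g4_zero hσ.ne' hμ hδ]
  exact hcont.continuousAt.tendsto.mono_left nhdsWithin_le_nhds
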